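/- Define the Daehee polynomials D_n(x) by (log(1+t)/t)(1+t)^x = ∑_{n≥0} D_n(x) t^n/n!. Then for every nonnegative integer n, D_n(x) = ∑_{m=0}^n s(n,m) B_m(x), where s(n,m) are signed Stirling numbers of the first kind and B_m(x) are Bernoulli polynomials. -/

import Mathlib

/-!
Differentiating `(1+t)^x = ∑ (x)_N t^N/N!` in `x` gives `log(1+t) (1+t)^x`: both solve
`(1+t) ∂ₜY = x Y + (1+t)^x` with `Y(0) = 0`, and this equation has a unique solution. Hence
`D_n(x) = (x)_{n+1}' / (n+1)`. On the other side, the linear map `x^m ↦ B_m(x)` sends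
`p(x+1) - p(x)` to `p'(x)` (this is `∑_{k ≤ m} C(m+1,k) B_k(x) = (m+1) x^m`), and
`(x+1)_{n+1} - (x)_{n+1} = (n+1) (x)_n`, so it sends `(x)_n = ∑ s(n,m) x^m` to `(x)_{n+1}' / (n+1)`.
-/

open Nat

/-- `log(1+t)` as a formal power series with coefficients in `ℚ[x]`. -/
noncomputable def logOneAddP : PowerSeries (Polynomial ℚ) :=
  PowerSeries.mk fun n => if n = 0 then 0 else Polynomial.C ((-1 : ℚ) ^ (n + 1) / n)

/-- `(1+t)^x = ∑_n (x)_n t^n / n!` as a formal power series with coefficients in `ℚ[x]`. -/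
noncomputable def onePlusTPowX : PowerSeries (Polynomial ℚ) :=
  PowerSeries.mk fun n => Polynomial.C ((n ! : ℚ)⁻¹) * descPochhammer ℚ n

namespace PowerSeries

theorem coeff_one_add_X_mul_derivative {R : Type*} [CommSemiring R] (f : R⟦X⟧) (n : ℕ) :
    coeff n ((1 + X) * d⁄dX R f) = (n + 1) * coeff (n + 1) f + n * coeff n f := by
  rw [add_mul, one_mul, map_add, coeff_derivative]
  cases n with
  | zero => simp [mul_comm]
  | succ n =>
    rw [coeff_succ_X_mul, coeff_derivative]
    push_cast
    ring

theorem eq_zero_of_one_add_X_mul_derivative_eq_C_mul {R : Type*} [CommRing R]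
    [IsAddTorsionFree R] {a : R} {f : R⟦X⟧} (hf : (1 + X) * d⁄dX R f = C a * f)
    (h0 : constantCoeff f = 0) : f = 0 := by
  ext n : 1
  induction n with
  | zero => simpa using h0
  | succ n ih =>
    have h := congrArg (coeff n) hf
    rw [coeff_one_add_X_mul_derivative, coeff_C_mul, ih, map_zero, mul_zero, mul_zero,
      add_zero, ← Nat.cast_succ, ← nsmul_eq_mul] at h
    exact (nsmul_eq_zero_iff_right n.succ_ne_zero).mp h

section DerivativeCoeffwise

variable {R : Type*} [CommSemiring R]

noncomputable def derivativeCoeffwise (f : (Polynomial R)⟦X⟧) : (Polynomial R)⟦X⟧ :=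
  mk fun n => Polynomial.derivative (coeff n f)

@[simp]
theorem coeff_derivativeCoeffwise (f : (Polynomial R)⟦X⟧) (n : ℕ) :
    coeff n (derivativeCoeffwise f) = Polynomial.derivative (coeff n f) :=
  coeff_mk _ _

theorem derivativeCoeffwise_C_X_mul (f : (Polynomial R)⟦X⟧) :
    derivativeCoeffwise (C Polynomial.X * f) = f + C Polynomial.X * derivativeCoeffwise f := by
  ext n : 1
  simp [Polynomial.derivative_mul]

theorem derivativeCoeffwise_one_add_X_mul_derivative (f : (Polynomial R)⟦X⟧) :
    derivativeCoeffwise ((1 + X) * d⁄dX _ f) = (1 + X) * d⁄dX _ (derivativeCoeffwise f) := by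
  ext n : 1
  simp [coeff_one_add_X_mul_derivative, Polynomial.derivative_mul]

end DerivativeCoeffwise

end PowerSeries

section Daehee

open PowerSeries

theorem C_inv_factorial_eq_succ_mul {K : Type*} [Field K] [CharZero K] (n : ℕ) :
    Polynomial.C ((n ! : K)⁻¹) = ((n : Polynomial K) + 1) * Polynomial.C (((n + 1)! : K)⁻¹) := by
  rw [← Polynomial.C_eq_natCast, ← Polynomial.C_1, ← map_add, ← map_mul]
  congr 1
  push_cast [Nat.factorial_succ]
  field_simp

theorem constantCoeff_logOneAddP : constantCoeff logOneAddP = 0 := by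
  simp [logOneAddP, ← coeff_zero_eq_constantCoeff_apply]

theorem one_add_X_mul_derivative_logOneAddP : (1 + X) * d⁄dX _ logOneAddP = 1 := by
  ext n : 1
  rw [coeff_one_add_X_mul_derivative, coeff_one]
  rcases n with _ | n
  · simp [logOneAddP]
  · have h : ((n + 1 : ℕ) + 1 : ℚ) * ((-1) ^ (n + 1 + 1 + 1) / (n + 1 + 1 : ℕ))
        + (n + 1 : ℕ) * ((-1) ^ (n + 1 + 1) / (n + 1 : ℕ)) = 0 := by
      field_simp
      push_cast
      ring
    simpa [logOneAddP] using congrArg Polynomial.C h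

theorem one_add_X_mul_derivative_onePlusTPowX :
    (1 + X) * d⁄dX _ onePlusTPowX = C Polynomial.X * onePlusTPowX := by
  ext n : 1
  rw [coeff_one_add_X_mul_derivative, coeff_C_mul]
  simp only [onePlusTPowX, coeff_mk, descPochhammer_succ_right]
  rw [C_inv_factorial_eq_succ_mul n]
  ring

theorem logOneAddP_mul_onePlusTPowX :
    logOneAddP * onePlusTPowX = derivativeCoeffwise onePlusTPowX := by
  rw [← sub_eq_zero]
  apply eq_zero_of_one_add_X_mul_derivative_eq_C_mul (a := Polynomial.X)
  · have hP := one_add_X_mul_derivative_onePlusTPowX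
    have hdP := congrArg derivativeCoeffwise hP
    rw [derivativeCoeffwise_one_add_X_mul_derivative, derivativeCoeffwise_C_X_mul] at hdP
    simp only [map_sub, Derivation.leibniz, smul_eq_mul]
    linear_combination logOneAddP * hP + onePlusTPowX * one_add_X_mul_derivative_logOneAddP - hdP
  · rw [map_sub, map_mul, constantCoeff_logOneAddP, zero_mul, zero_sub, neg_eq_zero,
      ← coeff_zero_eq_constantCoeff_apply]
    simp [onePlusTPowX]

end Daehee

section Bernoulli

open Polynomial

theorem descPochhammer_succ_comp_X_add_one_sub {R : Type*} [CommRing R] (n : ℕ) :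
    (descPochhammer R (n + 1)).comp (X + 1) - descPochhammer R (n + 1)
      = (n + 1) • descPochhammer R n := by
  have hcomp : (descPochhammer R (n + 1)).comp (X + 1) = (X + 1) * descPochhammer R n := by
    rw [descPochhammer_succ_left, mul_comp, X_comp, comp_assoc, sub_comp, X_comp, one_comp,
      add_sub_cancel_right, comp_X]
  rw [hcomp, descPochhammer_succ_right, nsmul_eq_mul]
  push_cast
  ring

noncomputable def bernoulliUmbra : ℚ[X] →ₗ[ℚ] ℚ[X] :=
  lsum fun m => LinearMap.toSpanSingleton ℚ ℚ[X] (Polynomial.bernoulli m)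

theorem bernoulliUmbra_monomial (m : ℕ) (a : ℚ) :
    bernoulliUmbra (monomial m a) = a • Polynomial.bernoulli m := by
  simp [bernoulliUmbra]

theorem bernoulliUmbra_comp_X_add_one_sub (p : ℚ[X]) :
    bernoulliUmbra (p.comp (X + 1) - p) = derivative p := by
  suffices bernoulliUmbra ∘ₗ ((aeval (X + 1 : ℚ[X])).toLinearMap - LinearMap.id) = derivative by
    simpa [comp_eq_aeval] using LinearMap.congr_fun this p
  refine lhom_ext' fun k => LinearMap.ext_ring ?_
  simp only [LinearMap.comp_apply, monomial_one_right_eq_X_pow]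
  rcases k with _ | n
  · simp
  have hΔ : (X + 1 : ℚ[X]) ^ (n + 1) - X ^ (n + 1)
      = ∑ k ∈ Finset.range (n + 1), monomial k ((n + 1).choose k : ℚ) := by
    rw [add_pow, Finset.sum_range_succ]
    simp [← C_mul_X_pow_eq_monomial, mul_comm]
  simp only [LinearMap.sub_apply, AlgHom.toLinearMap_apply, map_pow, aeval_X, LinearMap.id_apply,
    hΔ, map_sum, bernoulliUmbra_monomial, Polynomial.sum_bernoulli, derivative_X_pow,
    C_mul_X_pow_eq_monomial]
  push_cast
  rfl

theorem succ_nsmul_bernoulliUmbra_descPochhammer (n : ℕ) :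
    (n + 1) • bernoulliUmbra (descPochhammer ℚ n) = derivative (descPochhammer ℚ (n + 1)) := by
  rw [← map_nsmul, ← descPochhammer_succ_comp_X_add_one_sub, bernoulliUmbra_comp_X_add_one_sub]

end Bernoulli

/-- If the Daehee polynomials `D_n(x)` are defined by
`(log(1+t)/t)(1+t)^x = ∑ D_n(x) t^n/n!` (equivalently
`log(1+t)·(1+t)^x = t · ∑ D_n(x) t^n/n!`), and `s(N,m)` are the signed Stirling numbers
of the first kind (`(x)_N = ∑_m s(N,m) x^m`), then `D_n(x) = ∑_{m=0}^n s(n,m) B_m(x)`,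
where `B_m(x)` are the Bernoulli polynomials (with `B_1(x) = x - 1/2`). -/
theorem daehee_poly_eq_stirling_sum_bernoulli
    (D : ℕ → Polynomial ℚ) (s : ℕ → ℕ → ℚ)
    (hD : ∀ n : ℕ, PowerSeries.coeff (n + 1) (logOneAddP * onePlusTPowX)
        = Polynomial.C ((n ! : ℚ)⁻¹) * D n)
    (hs : ∀ N : ℕ, descPochhammer ℚ N =
      ∑ m ∈ Finset.range (N + 1), Polynomial.C (s N m) * Polynomial.X ^ m) :
    ∀ n : ℕ, D n = ∑ m ∈ Finset.range (n + 1), Polynomial.C (s n m) * Polynomial.bernoulli m := by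
  intro n
  have hStirling : bernoulliUmbra (descPochhammer ℚ n)
      = ∑ m ∈ Finset.range (n + 1), Polynomial.C (s n m) * Polynomial.bernoulli m := by
    simp only [hs n, map_sum, Polynomial.C_mul_X_pow_eq_monomial, bernoulliUmbra_monomial,
      Polynomial.smul_eq_C_mul]
  have hDaehee : Polynomial.C ((n ! : ℚ)⁻¹) * D n
      = Polynomial.C ((n ! : ℚ)⁻¹) * bernoulliUmbra (descPochhammer ℚ n) := by
    rw [← hD n, logOneAddP_mul_onePlusTPowX, PowerSeries.coeff_derivativeCoeffwise, onePlusTPowX,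
      PowerSeries.coeff_mk, Polynomial.derivative_C_mul, ← succ_nsmul_bernoulliUmbra_descPochhammer,
      C_inv_factorial_eq_succ_mul n, nsmul_eq_mul]
    push_cast
    ring
  rw [← hStirling]
  exact mul_left_cancel₀ (by simp [factorial_ne_zero]) hDaehee
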